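/- arXiv:1812.03902 — 2 statements merged into one kernel-verified Lean document; each statement's English description precedes it below -/
import Mathlib

section
/- (Theorem 1.) Let T ≥ 2 be an integer, let n_1, …, n_T be positive integers, let n_r = max(n_1, …, n_T), and assume n_r ≥ 2. Let l = ⌈log₂ n_r⌉, let s ≥ 1 be an integer, and set t = l + s. Define p_i = 1/2^{i+1} for i ∈ {0,1,…,t−2} and p_{t−1} = 1/2^{t−1}; u(n,i) = (1−p_i)^{n}; v(n,i) = n p_i (1−p_i)^{n−1}; Q1(i) = 1 − u(n_1,i) − v(n_1,i); Q2(i) = v(n_1,i)·∏_{b=2}^{T}(1 − u(n_b,i)); Q3(i) = u(n_1,i)·∏_{b=2}^{T}(1 − u(n_b,i) − v(n_b,i)). Then ∑_{i=0}^{t−1} ( Q1(i) + Q2(i) + Q3(i) ) ≤ (l − 1) + (2/3)·(n_1²/n_r²)·(1 + 2/4^{s}) + ( (n_2 n_3 ⋯ n_T)/n_r^{T−1} )² · [ 1 / ( 2^{T−1} (1 − 4^{−(T−1)}) ) ] · ( 1 − (2/4^{(T−1)s})·(1 − 4^{T−1}/2) ) + ( (n_1 n_2 ⋯ n_T)/n_r^{T}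 ) · [ 1 / (1 − 2^{−T}) ] · ( 1 − (2/2^{Ts})·(1 − 2^{T−1}) ). -/
lemma lemC (p : ℝ) (hp1 : p ≤ 1) (m : ℕ) : 1 - (1 - p) ^ m ≤ (m : ℝ) * p := by
  have h := one_add_mul_le_pow (a := -p) (by linarith) m
  simp only [mul_neg, ← sub_eq_add_neg] at h
  linarith

lemma lemA (p : ℝ) (hp0 : 0 ≤ p) (hp1 : p ≤ 1) (k : ℕ) :
    (1 - p) ^ (k + 1) + ((k : ℝ) + 1) * p * (1 - p) ^ k ≤ 1 := by
  have h1 : (1 : ℝ) + k * p ≤ (1 + p) ^ k := one_add_mul_le_pow (by linarith) k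
  have h2 : (0 : ℝ) ≤ (1 - p) ^ k := pow_nonneg (by linarith) k
  have h3 : ((1 - p) * (1 + p)) ^ k ≤ 1 := by
    apply pow_le_one₀ <;> nlinarith
  have key : (1 - p) ^ (k + 1) + ((k : ℝ) + 1) * p * (1 - p) ^ k
      = (1 - p) ^ k * (1 + k * p) := by ring
  rw [key]
  calc (1 - p) ^ k * (1 + k * p) ≤ (1 - p) ^ k * (1 + p) ^ k := by
        exact mul_le_mul_of_nonneg_left h1 h2
    _ = ((1 - p) * (1 + p)) ^ k := (mul_pow _ _ _).symm
    _ ≤ 1 := h3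

lemma lemB (p : ℝ) (hp0 : 0 ≤ p) (hp1 : p ≤ 1) (k : ℕ) :
    1 - (1 - p) ^ (k + 1) - ((k : ℝ) + 1) * p * (1 - p) ^ k ≤ ((k : ℝ) + 1) ^ 2 * p ^ 2 / 2 := by
  induction k with
  | zero => simp; nlinarith
  | succ k ih =>
    have hw : (1 - p) ^ k ≤ 1 := pow_le_one₀ (by linarith) (by linarith)
    have hw0 : (0 : ℝ) ≤ (1 - p) ^ k := pow_nonneg (by linarith) k
    have key : 1 - (1 - p) ^ (k + 1 + 1) - ((k : ℝ) + 1 + 1) * p * (1 - p) ^ (k + 1)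
        = (1 - (1 - p) ^ (k + 1) - ((k : ℝ) + 1) * p * (1 - p) ^ k)
          + p ^ 2 * ((k : ℝ) + 1) * (1 - p) ^ k := by ring
    push_cast
    rw [key]
    have h4 : p ^ 2 * ((k : ℝ) + 1) * (1 - p) ^ k ≤ p ^ 2 * ((k : ℝ) + 1) :=
      mul_le_of_le_one_right (by positivity) hw
    nlinarith [ih]

lemma lemN (q : ℝ) (h0 : 0 ≤ q) (h1 : q ≤ 1) (s : ℕ) (hs : 1 ≤ s) :
    0 ≤ 1 - 2 * q ^ s + q ^ (s - 1) := by
  have h2 : q ^ s ≤ q ^ (s - 1) := pow_le_pow_of_le_one h0 h1 (by omega)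
  have h3 : q ^ s ≤ 1 := pow_le_one₀ h0 h1
  linarith

lemma sumGeom (l s : ℕ) (hl : 1 ≤ l) (hs : 1 ≤ s) (q : ℝ) (hq1 : q < 1)
    (f : ℕ → ℝ) (hf : ∀ i < l + s - 1, f i = q ^ (i + 1)) (hf2 : f (l + s - 1) = q ^ (l + s - 1)) :
    ∑ i ∈ Finset.Ico (l - 1) (l + s), f i = q ^ l * (1 - 2 * q ^ s + q ^ (s - 1)) / (1 - q) := by
  obtain ⟨l', rfl⟩ : ∃ l', l = l' + 1 := ⟨l - 1, by omega⟩
  obtain ⟨s', rfl⟩ : ∃ s', s = s' + 1 := ⟨s - 1, by omega⟩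
  have hqe : q ≠ 1 := ne_of_lt hq1
  have h1 : l' + 1 + (s' + 1) = (l' + s' + 1) + 1 := by ring
  have h2 : l' + 1 + (s' + 1) - 1 = l' + s' + 1 := by omega
  rw [h2] at hf hf2
  rw [h1, Finset.sum_Ico_succ_top (by omega), hf2]
  have h3 : ∑ i ∈ Finset.Ico (l' + 1 - 1) (l' + s' + 1), f i
      = ∑ i ∈ Finset.Ico l' (l' + s' + 1), q ^ (i + 1) := by
    rw [show l' + 1 - 1 = l' by omega]
    apply Finset.sum_congr rfl
    intro i hi
    rw [Finset.mem_Ico] at hi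
    exact hf i (by omega)
  rw [h3]
  have h4 : ∑ i ∈ Finset.Ico l' (l' + s' + 1), q ^ (i + 1)
      = q * ∑ i ∈ Finset.Ico l' (l' + s' + 1), q ^ i := by
    rw [Finset.mul_sum]; apply Finset.sum_congr rfl; intro i _; ring
  rw [h4, geom_sum_Ico hqe (by omega)]
  have e1 : q ^ (l' + s' + 1) = q ^ l' * q ^ s' * q := by ring
  have e2 : q ^ (l' + 1) = q ^ l' * q := by ring
  have e3 : q ^ (s' + 1) = q ^ s' * q := by ring
  have e4 : (s' + 1 : ℕ) - 1 = s' := by omega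
  rw [e1, e2, e3, e4]
  have hne : q - 1 ≠ 0 := by intro h; apply hqe; linarith
  have hne2 : 1 - q ≠ 0 := by intro h; apply hqe; linarith
  field_simp
  ring


lemma invlt (Q : ℝ) (h : 1 < Q) : Q⁻¹ < 1 := by
  have h0 : 0 < Q := by linarith
  have h1 := mul_inv_cancel₀ (ne_of_gt h0)
  nlinarith [inv_pos.mpr h0]

lemma termHelper (C D Q X : ℝ) (hC : 0 ≤ C) (hD : 0 ≤ D) (hQ : 1 < Q) (s : ℕ) (hs : 1 ≤ s)
    (hX : X ≤ D) :
    C * (X * (1 - 2 * (Q⁻¹) ^ s + (Q⁻¹) ^ (s - 1)) / (1 - Q⁻¹))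
      ≤ C * D * (1 / (1 - Q⁻¹)) * (1 - (2 / Q ^ s) * (1 - Q / 2)) := by
  have hQ0 : 0 < Q := by linarith
  have hQi1 : Q⁻¹ < 1 := invlt Q hQ
  have h1 : 0 < 1 - Q⁻¹ := by linarith
  have hN0 : 0 ≤ 1 - 2 * (Q⁻¹) ^ s + (Q⁻¹) ^ (s - 1) :=
    lemN Q⁻¹ (by positivity) (le_of_lt hQi1) s hs
  have hN : 1 - 2 * (Q⁻¹) ^ s + (Q⁻¹) ^ (s - 1) = 1 - (2 / Q ^ s) * (1 - Q / 2) := by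
    obtain ⟨s', rfl⟩ : ∃ s', s = s' + 1 := ⟨s - 1, by omega⟩
    simp only [Nat.add_sub_cancel]
    rw [inv_pow, inv_pow, pow_succ]
    have h2 : (Q : ℝ) ^ s' ≠ 0 := by positivity
    field_simp
    ring
  calc C * (X * (1 - 2 * (Q⁻¹) ^ s + (Q⁻¹) ^ (s - 1)) / (1 - Q⁻¹))
      = (C * (1 - 2 * (Q⁻¹) ^ s + (Q⁻¹) ^ (s - 1)) / (1 - Q⁻¹)) * X := by ring
    _ ≤ (C * (1 - 2 * (Q⁻¹) ^ s + (Q⁻¹) ^ (s - 1)) / (1 - Q⁻¹)) * D :=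
        mul_le_mul_of_nonneg_left hX (by positivity)
    _ = C * D * (1 / (1 - Q⁻¹)) * (1 - 2 * (Q⁻¹) ^ s + (Q⁻¹) ^ (s - 1)) := by ring
    _ = C * D * (1 / (1 - Q⁻¹)) * (1 - (2 / Q ^ s) * (1 - Q / 2)) := by rw [hN]

/-- (Theorem 1.) Let `T ≥ 2`, let `n b` (`b : Fin T`, index `0` playing the role of
type 1) be positive integers, `n_r = max(n₁,…,n_T)` with `n_r ≥ 2`, `l = ⌈log₂ n_r⌉`
(i.e. `Nat.clog 2 n_r`), `s ≥ 1`, and `t = l + s`. With `p_i = 1/2^(i+1)` for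
`i ≤ t-2`, `p_(t-1) = 1/2^(t-1)`, `u(n,i) = (1-p_i)^n`, `v(n,i) = n p_i (1-p_i)^(n-1)`,
`Q1(i) = 1 - u(n₁,i) - v(n₁,i)`, `Q2(i) = v(n₁,i) ∏_{b=2}^{T} (1 - u(n_b,i))`,
`Q3(i) = u(n₁,i) ∏_{b=2}^{T} (1 - u(n_b,i) - v(n_b,i))`, we have
`∑_{i=0}^{t-1} (Q1(i)+Q2(i)+Q3(i)) ≤ (l-1) + (2/3)(n₁²/n_r²)(1+2/4^s)
  + ((n₂⋯n_T)/n_r^(T-1))² (1/(2^(T-1)(1-4^(-(T-1))))) (1 - (2/4^((T-1)s))(1-4^(T-1)/2))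
  + ((n₁⋯n_T)/n_r^T) (1/(1-2^(-T))) (1 - (2/2^(Ts))(1-2^(T-1)))`. -/
theorem stmt14 (T : ℕ) (hT : 2 ≤ T) (n : Fin T → ℕ) (hn : ∀ b, 0 < n b)
    (nr : ℕ) (hnr : nr = Finset.univ.sup n) (hnr2 : 2 ≤ nr)
    (s : ℕ) (hs : 1 ≤ s) :
    let z : Fin T := ⟨0, by omega⟩
    let l : ℕ := Nat.clog 2 nr
    let t : ℕ := l + s
    let p : ℕ → ℝ := fun i => if i < t - 1 then (1 / 2 : ℝ) ^ (i + 1) else (1 / 2 : ℝ) ^ (t - 1)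
    let u : ℕ → ℕ → ℝ := fun m i => (1 - p i) ^ m
    let v : ℕ → ℕ → ℝ := fun m i => (m : ℝ) * p i * (1 - p i) ^ (m - 1)
    let Q1 : ℕ → ℝ := fun i => 1 - u (n z) i - v (n z) i
    let Q2 : ℕ → ℝ := fun i => v (n z) i * ∏ b ∈ Finset.univ.erase z, (1 - u (n b) i)
    let Q3 : ℕ → ℝ := fun i => u (n z) i * ∏ b ∈ Finset.univ.erase z, (1 - u (n b) i - v (n b) i)
    ∑ i ∈ Finset.range t, (Q1 i + Q2 i + Q3 i) ≤
      ((l : ℝ) - 1) +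
      (2 / 3) * ((n z : ℝ) ^ 2 / (nr : ℝ) ^ 2) * (1 + 2 / (4 : ℝ) ^ s) +
      ((∏ b ∈ Finset.univ.erase z, (n b : ℝ)) / (nr : ℝ) ^ (T - 1)) ^ 2 *
        (1 / ((2 : ℝ) ^ (T - 1) * (1 - ((4 : ℝ) ^ (T - 1))⁻¹))) *
        (1 - (2 / (4 : ℝ) ^ ((T - 1) * s)) * (1 - (4 : ℝ) ^ (T - 1) / 2)) +
      ((∏ b, (n b : ℝ)) / (nr : ℝ) ^ T) *
        (1 / (1 - ((2 : ℝ) ^ T)⁻¹)) *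
        (1 - (2 / (2 : ℝ) ^ (T * s)) * (1 - (2 : ℝ) ^ (T - 1))) := by
  intro z l t p u v Q1 Q2 Q3
  have hl : 1 ≤ l := Nat.clog_pos (by norm_num) hnr2
  have hnr0 : (0:ℝ) < (nr:ℝ) := by exact_mod_cast Nat.lt_of_lt_of_le (by norm_num) hnr2
  have hnrle : (nr : ℝ) ≤ 2 ^ l := by exact_mod_cast Nat.le_pow_clog (by norm_num) nr
  have hhalf : (1/2:ℝ) ^ l ≤ (nr:ℝ)⁻¹ := by
    rw [one_div, inv_pow]
    exact inv_anti₀ hnr0 hnrle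
  have ht1 : 1 ≤ t - 1 := by omega
  have hp0 : ∀ i, 0 < p i := by
    intro i
    show (0:ℝ) < if i < t - 1 then (1 / 2 : ℝ) ^ (i + 1) else (1 / 2 : ℝ) ^ (t - 1)
    split <;> positivity
  have hp1 : ∀ i, p i ≤ 1 := by
    intro i
    show (if i < t - 1 then (1 / 2 : ℝ) ^ (i + 1) else (1 / 2 : ℝ) ^ (t - 1)) ≤ 1
    split <;> exact pow_le_one₀ (by norm_num) (by norm_num)
  have hu0 : ∀ m i, 0 ≤ u m i := fun m i => pow_nonneg (by linarith [hp1 i]) m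
  have hu1 : ∀ m i, u m i ≤ 1 := fun m i => pow_le_one₀ (by linarith [hp1 i]) (by linarith [hp0 i])
  have hv0 : ∀ m i, 0 ≤ v m i := by
    intro m i
    have := hp0 i; have := hp1 i
    have : (0:ℝ) ≤ (1 - p i) ^ (m - 1) := pow_nonneg (by linarith) _
    positivity
  have hA : ∀ (m : ℕ), 1 ≤ m → ∀ i, u m i + v m i ≤ 1 := by
    intro m hm i
    obtain ⟨k, rfl⟩ : ∃ k, m = k + 1 := ⟨m - 1, by omega⟩
    show (1 - p i) ^ (k+1) + ((k+1:ℕ) : ℝ) * p i * (1 - p i) ^ (k+1-1) ≤ 1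
    rw [show k+1-1 = k from rfl]
    push_cast
    exact lemA (p i) (le_of_lt (hp0 i)) (hp1 i) k
  have hB : ∀ (m : ℕ), 1 ≤ m → ∀ i, 1 - u m i - v m i ≤ (m:ℝ)^2 * (p i)^2 / 2 := by
    intro m hm i
    obtain ⟨k, rfl⟩ : ∃ k, m = k + 1 := ⟨m - 1, by omega⟩
    show 1 - (1 - p i) ^ (k+1) - ((k+1:ℕ) : ℝ) * p i * (1 - p i) ^ (k+1-1) ≤ ((k+1:ℕ):ℝ)^2 * (p i)^2 / 2
    rw [show k+1-1 = k from rfl]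
    push_cast
    exact lemB (p i) (le_of_lt (hp0 i)) (hp1 i) k
  have hC : ∀ (m : ℕ) i, 1 - u m i ≤ (m:ℝ) * p i := fun m i => lemC (p i) (hp1 i) m
  have hcard : (Finset.univ.erase z).card = T - 1 := by
    rw [Finset.card_erase_of_mem (Finset.mem_univ z), Finset.card_univ, Fintype.card_fin]
  -- pointwise bound by 1
  have hg1 : ∀ i, Q1 i + Q2 i + Q3 i ≤ 1 := by
    intro i
    have h2 : Q2 i ≤ v (n z) i := by
      have hp : (∏ b ∈ Finset.univ.erase z, (1 - u (n b) i)) ≤ 1 :=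
        Finset.prod_le_one (fun b _ => by linarith [hu1 (n b) i]) (fun b _ => by linarith [hu0 (n b) i])
      calc Q2 i ≤ v (n z) i * 1 := mul_le_mul_of_nonneg_left hp (hv0 _ i)
        _ = v (n z) i := mul_one _
    have h3 : Q3 i ≤ u (n z) i := by
      have hp : (∏ b ∈ Finset.univ.erase z, (1 - u (n b) i - v (n b) i)) ≤ 1 :=
        Finset.prod_le_one (fun b _ => by linarith [hA (n b) (hn b) i])
          (fun b _ => by linarith [hu0 (n b) i, hv0 (n b) i])
      calc Q3 i ≤ u (n z) i * 1 := mul_le_mul_of_nonneg_left hp (hu0 _ i)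
        _ = u (n z) i := mul_one _
    have h1 : Q1 i = 1 - u (n z) i - v (n z) i := rfl
    linarith
  -- constants
  set P2 : ℝ := ∏ b ∈ Finset.univ.erase z, (n b : ℝ) with hP2
  set P : ℝ := ∏ b, (n b : ℝ) with hP
  have hP2pos : 0 < P2 := Finset.prod_pos (fun b _ => by exact_mod_cast hn b)
  have hPpos : 0 < P := Finset.prod_pos (fun b _ => by exact_mod_cast hn b)
  have hPP2 : (n z : ℝ) * P2 = P := by
    rw [hP2, hP]
    exact Finset.mul_prod_erase Finset.univ (fun b => ((n b : ℕ) : ℝ)) (Finset.mem_univ z)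
  -- pointwise bound 2
  have hg2 : ∀ i, Q1 i + Q2 i + Q3 i ≤
      (n z:ℝ)^2/2 * (p i)^2 + P2^2/2^(T-1) * (p i)^(2*(T-1)) + P * (p i)^T := by
    intro i
    have hpi0 := hp0 i
    have hpi1 := hp1 i
    have h1 : Q1 i ≤ (n z:ℝ)^2/2 * (p i)^2 := by
      have := hB (n z) (hn z) i
      show 1 - u (n z) i - v (n z) i ≤ _
      linarith
    have h2 : Q2 i ≤ P * (p i)^T := by
      have hvz : v (n z) i ≤ (n z:ℝ) * p i := by
        have hw : (1 - p i) ^ (n z - 1) ≤ 1 := pow_le_one₀ (by linarith) (by linarith)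
        calc v (n z) i = (n z:ℝ) * p i * (1 - p i) ^ (n z - 1) := rfl
          _ ≤ (n z:ℝ) * p i * 1 := mul_le_mul_of_nonneg_left hw (by positivity)
          _ = (n z:ℝ) * p i := mul_one _
      have hprod : (∏ b ∈ Finset.univ.erase z, (1 - u (n b) i)) ≤ P2 * (p i)^(T-1) := by
        calc (∏ b ∈ Finset.univ.erase z, (1 - u (n b) i))
            ≤ ∏ b ∈ Finset.univ.erase z, ((n b : ℝ) * p i) :=
              Finset.prod_le_prod (fun b _ => by linarith [hu1 (n b) i]) (fun b _ => hC (n b) i)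
          _ = P2 * (p i)^(T-1) := by
              rw [Finset.prod_mul_distrib, Finset.prod_const, hcard]
      have hprod0 : (0:ℝ) ≤ ∏ b ∈ Finset.univ.erase z, (1 - u (n b) i) :=
        Finset.prod_nonneg (fun b _ => by linarith [hu1 (n b) i])
      calc Q2 i = v (n z) i * ∏ b ∈ Finset.univ.erase z, (1 - u (n b) i) := rfl
        _ ≤ ((n z:ℝ) * p i) * (P2 * (p i)^(T-1)) :=
            mul_le_mul hvz hprod hprod0 (by positivity)
        _ = ((n z:ℝ) * P2) * (p i * (p i)^(T-1)) := by ring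
        _ = P * (p i)^T := by
            rw [hPP2, ← pow_succ']
            congr 2
            omega
    have h3 : Q3 i ≤ P2^2/2^(T-1) * (p i)^(2*(T-1)) := by
      have hprod : (∏ b ∈ Finset.univ.erase z, (1 - u (n b) i - v (n b) i))
          ≤ ∏ b ∈ Finset.univ.erase z, ((n b : ℝ)^2 * ((p i)^2/2)) := by
        apply Finset.prod_le_prod
        · intro b _; linarith [hA (n b) (hn b) i]
        · intro b _
          have := hB (n b) (hn b) i
          linarith
      have hprod0 : (0:ℝ) ≤ ∏ b ∈ Finset.univ.erase z, (1 - u (n b) i - v (n b) i) :=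
        Finset.prod_nonneg (fun b _ => by linarith [hA (n b) (hn b) i])
      have heq : (∏ b ∈ Finset.univ.erase z, ((n b : ℝ)^2 * ((p i)^2/2)))
          = P2^2/2^(T-1) * (p i)^(2*(T-1)) := by
        rw [Finset.prod_mul_distrib, Finset.prod_const, hcard, Finset.prod_pow, div_pow, pow_mul]
        ring
      calc Q3 i = u (n z) i * ∏ b ∈ Finset.univ.erase z, (1 - u (n b) i - v (n b) i) := rfl
        _ ≤ 1 * ∏ b ∈ Finset.univ.erase z, ((n b : ℝ)^2 * ((p i)^2/2)) :=
            mul_le_mul (hu1 _ i) hprod hprod0 (by norm_num)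
        _ = P2^2/2^(T-1) * (p i)^(2*(T-1)) := by rw [one_mul, heq]
    linarith
  -- split the sum
  have hsplit : ∑ i ∈ Finset.range t, (Q1 i + Q2 i + Q3 i)
      = (∑ i ∈ Finset.range (l-1), (Q1 i + Q2 i + Q3 i))
        + ∑ i ∈ Finset.Ico (l-1) t, (Q1 i + Q2 i + Q3 i) := by
    rw [Finset.range_eq_Ico, Finset.range_eq_Ico]
    exact (Finset.sum_Ico_consecutive (fun i => Q1 i + Q2 i + Q3 i) (Nat.zero_le _) (by omega : l - 1 ≤ t)).symm
  have hfirst : (∑ i ∈ Finset.range (l-1), (Q1 i + Q2 i + Q3 i)) ≤ (l:ℝ) - 1 := by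
    calc (∑ i ∈ Finset.range (l-1), (Q1 i + Q2 i + Q3 i)) ≤ (Finset.range (l-1)).card • (1:ℝ) :=
        Finset.sum_le_card_nsmul _ _ 1 (fun i _ => hg1 i)
      _ = ((l-1 : ℕ) : ℝ) := by simp
      _ = (l:ℝ) - 1 := by
          rw [Nat.cast_sub hl, Nat.cast_one]
  -- geometric sums
  have hqlt1 : ∀ a : ℕ, 1 ≤ a → (1/2:ℝ)^a < 1 := fun a ha =>
    pow_lt_one₀ (by norm_num) (by norm_num) (by omega)
  have hpow : ∀ (a : ℕ) i, i < t - 1 → (p i)^a = ((1/2:ℝ)^a)^(i+1) := by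
    intro a i hi
    have : p i = (1/2:ℝ)^(i+1) := if_pos hi
    rw [this, pow_right_comm]
  have hpow2 : ∀ (a : ℕ), (p (t-1))^a = ((1/2:ℝ)^a)^(t-1) := by
    intro a
    have : p (t-1) = (1/2:ℝ)^(t-1) := if_neg (by omega)
    rw [this, pow_right_comm]
  have hS : ∀ a : ℕ, 1 ≤ a → ∑ i ∈ Finset.Ico (l-1) t, (p i)^a
      = ((1/2:ℝ)^a)^l * (1 - 2*((1/2:ℝ)^a)^s + ((1/2:ℝ)^a)^(s-1)) / (1 - (1/2:ℝ)^a) := by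
    intro a ha
    exact sumGeom l s hl hs ((1/2:ℝ)^a) (hqlt1 a ha)
      (fun i => (p i)^a) (fun i hi => hpow a i hi) (hpow2 a)
  have hsecond : (∑ i ∈ Finset.Ico (l-1) t, (Q1 i + Q2 i + Q3 i))
      ≤ (n z:ℝ)^2/2 * (∑ i ∈ Finset.Ico (l-1) t, (p i)^2)
        + P2^2/2^(T-1) * (∑ i ∈ Finset.Ico (l-1) t, (p i)^(2*(T-1)))
        + P * (∑ i ∈ Finset.Ico (l-1) t, (p i)^T) := by
    calc (∑ i ∈ Finset.Ico (l-1) t, (Q1 i + Q2 i + Q3 i))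
        ≤ ∑ i ∈ Finset.Ico (l-1) t, ((n z:ℝ)^2/2 * (p i)^2 + P2^2/2^(T-1) * (p i)^(2*(T-1)) + P * (p i)^T) :=
          Finset.sum_le_sum (fun i _ => hg2 i)
      _ = _ := by
          rw [Finset.sum_add_distrib, Finset.sum_add_distrib, Finset.mul_sum, Finset.mul_sum, Finset.mul_sum]
  rw [hsplit]
  have hS2 := hS 2 (by norm_num)
  have hS3 := hS (2*(T-1)) (by omega)
  have hS4 := hS T (by omega)
  rw [hS2, hS3, hS4] at hsecond
  have c2e : ((1/2:ℝ)^2) = ((4:ℝ))⁻¹ := by norm_num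
  have c3e : ((1/2:ℝ)^(2*(T-1))) = ((4:ℝ)^(T-1))⁻¹ := by
    rw [pow_mul, c2e, inv_pow]
  have c4e : ((1/2:ℝ)^T) = ((2:ℝ)^T)⁻¹ := by rw [one_div, inv_pow]
  rw [c2e, c3e, c4e] at hsecond
  have hX2 : ((4:ℝ)⁻¹)^l ≤ (((nr:ℝ))^2)⁻¹ := by
    have h := pow_le_pow_left₀ (by positivity) hhalf 2
    rw [pow_right_comm, c2e] at h
    exact le_of_le_of_eq h (inv_pow _ _)
  have hX3 : (((4:ℝ)^(T-1))⁻¹)^l ≤ ((((nr:ℝ))^(T-1))^2)⁻¹ := by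
    have h := pow_le_pow_left₀ (by positivity) hhalf (2*(T-1))
    rw [pow_right_comm, c3e] at h
    have e : ((nr:ℝ)⁻¹)^(2*(T-1)) = (((nr:ℝ)^(T-1))^2)⁻¹ := by
      rw [mul_comm 2 (T-1), pow_mul, inv_pow, inv_pow]
    exact le_of_le_of_eq h e
  have hX4 : (((2:ℝ)^T)⁻¹)^l ≤ (((nr:ℝ))^T)⁻¹ := by
    have h := pow_le_pow_left₀ (by positivity) hhalf T
    rw [pow_right_comm, c4e] at h
    exact le_of_le_of_eq h (inv_pow _ _)
  refine le_trans (add_le_add hfirst hsecond) ?_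
  have one_lt4T : (1:ℝ) < 4^(T-1) := one_lt_pow₀ (by norm_num) (by omega)
  have one_lt2T : (1:ℝ) < 2^T := one_lt_pow₀ (by norm_num) (by omega)
  have hz3 : (0:ℝ) < 1 - ((4:ℝ)^(T-1))⁻¹ := by linarith [invlt _ one_lt4T]
  have hz4 : (0:ℝ) < 1 - ((2:ℝ)^T)⁻¹ := by linarith [invlt _ one_lt2T]
  have hterm2 : (n z:ℝ)^2/2 * ((4:ℝ)⁻¹^l * (1 - 2*(4:ℝ)⁻¹^s + (4:ℝ)⁻¹^(s-1)) / (1 - (4:ℝ)⁻¹))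
      ≤ (2/3) * ((n z:ℝ)^2/(nr:ℝ)^2) * (1 + 2/(4:ℝ)^s) := by
    refine le_trans (termHelper _ _ 4 _ (by positivity) (by positivity) (by norm_num) s hs hX2)
      (le_of_eq ?_)
    have h1 : ((4:ℝ)^s) ≠ 0 := by positivity
    have h2 : ((nr:ℝ)) ≠ 0 := ne_of_gt hnr0
    field_simp
    ring
  have hterm3 : P2^2/2^(T-1) * (((4:ℝ)^(T-1))⁻¹^l * (1 - 2*((4:ℝ)^(T-1))⁻¹^s + ((4:ℝ)^(T-1))⁻¹^(s-1)) / (1 - ((4:ℝ)^(T-1))⁻¹))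
      ≤ (P2/(nr:ℝ)^(T-1))^2 * (1/((2:ℝ)^(T-1)*(1 - ((4:ℝ)^(T-1))⁻¹))) * (1 - (2/(4:ℝ)^((T-1)*s))*(1 - (4:ℝ)^(T-1)/2)) := by
    refine le_trans (termHelper _ _ ((4:ℝ)^(T-1)) _ (by positivity) (by positivity) one_lt4T s hs hX3)
      (le_of_eq ?_)
    rw [← pow_mul 4 (T-1) s]
    have h1 : ((4:ℝ)^((T-1)*s)) ≠ 0 := by positivity
    have h2 : ((nr:ℝ)^(T-1)) ≠ 0 := by positivity
    have h3 : ((2:ℝ)^(T-1)) ≠ 0 := by positivity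
    have h4 : (1:ℝ) - ((4:ℝ)^(T-1))⁻¹ ≠ 0 := ne_of_gt hz3
    congr 1
    rw [div_pow]
    set A : ℝ := (2:ℝ)^(T-1) with hAd
    set B : ℝ := (nr:ℝ)^(T-1) with hBd
    set K : ℝ := ((4:ℝ)^(T-1))⁻¹ with hKd
    field_simp
  have hterm4 : P * (((2:ℝ)^T)⁻¹^l * (1 - 2*((2:ℝ)^T)⁻¹^s + ((2:ℝ)^T)⁻¹^(s-1)) / (1 - ((2:ℝ)^T)⁻¹))
      ≤ (P/(nr:ℝ)^T) * (1/(1 - ((2:ℝ)^T)⁻¹)) * (1 - (2/(2:ℝ)^(T*s))*(1 - (2:ℝ)^(T-1))) := by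
    refine le_trans (termHelper _ _ ((2:ℝ)^T) _ (le_of_lt hPpos) (by positivity) one_lt2T s hs hX4)
      (le_of_eq ?_)
    rw [← pow_mul 2 T s]
    have e : (2:ℝ)^T/2 = 2^(T-1) := by
      have h5 : (2:ℝ)^(T-1) * 2 = 2^T := by
        rw [← pow_succ]; congr 1; omega
      linarith
    rw [e]
    have h1 : ((2:ℝ)^(T*s)) ≠ 0 := by positivity
    have h2 : ((nr:ℝ)^T) ≠ 0 := by positivity
    have h4 : (1:ℝ) - ((2:ℝ)^T)⁻¹ ≠ 0 := ne_of_gt hz4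
    congr 1
  refine le_trans (add_le_add_right (add_le_add (add_le_add hterm2 hterm3) hterm4) _)
    (le_of_eq ?_)
  rw [← add_assoc, ← add_assoc]
end

section
/- (Theorem 2.) Let T ≥ 2 be an integer, let n_1, …, n_T be positive integers, let n_r = max(n_1, …, n_T), and assume n_r ≥ 2. Let l = ⌈log₂ n_r⌉, let s ≥ 1 be an integer, and set t = l + s. Define p_i = 1/2^{i+1} for i ∈ {0,1,…,t−2} and p_{t−1} = 1/2^{t−1}, and Q1(i) = 1 − (1−p_i)^{n_1} − n_1 p_i (1−p_i)^{n_1−1}. Then ∑_{i=0}^{t−1} Q1(i) ≤ (l − 1) + (2/3)·(n_1²/n_r²)·(1 + 2/4^{s}). -/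
/-!
Write `Q(n, p) = 1 - (1-p)^n - n p (1-p)^(n-1)`. Since `Q(n+1, p) - Q(n, p) = n p² (1-p)^(n-1)`,
one has `Q(n, p) ≤ C(n,2) p² ≤ n² p² / 2`, and trivially `Q(n, p) ≤ 1`. Use `Q ≤ 1` on the first
`l - 1` slots and the quadratic bound on the last `s + 1`, whose squared probabilities form a
geometric series summing to `(4/3) 4^{-l} (1 + 2·4^{-s})`; finally `4^l ≥ n_r²` as `2^l ≥ n_r`.
-/

open Finset

noncomputable section

def probAtLeastTwo (n : ℕ) (p : ℝ) : ℝ :=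
  1 - (1 - p) ^ n - n * p * (1 - p) ^ (n - 1)

def hashProb (t i : ℕ) : ℝ :=
  if i < t - 1 then (1 / 2 : ℝ) ^ (i + 1) else (1 / 2 : ℝ) ^ (t - 1)

end

section probAtLeastTwo

variable {p : ℝ}

theorem probAtLeastTwo_le_one (hp0 : 0 ≤ p) (hp1 : p ≤ 1) (n : ℕ) : probAtLeastTwo n p ≤ 1 := by
  have h1 : 0 ≤ (1 - p) ^ n := pow_nonneg (by linarith) n
  have h2 : 0 ≤ n * p * (1 - p) ^ (n - 1) := by
    have : 0 ≤ 1 - p := by linarith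
    positivity
  unfold probAtLeastTwo
  linarith

theorem probAtLeastTwo_succ_succ (m : ℕ) :
    probAtLeastTwo (m + 2) p = probAtLeastTwo (m + 1) p + (m + 1) * p ^ 2 * (1 - p) ^ m := by
  simp only [probAtLeastTwo, Nat.add_sub_cancel]
  push_cast
  ring

theorem probAtLeastTwo_le_choose_two_mul_sq (hp0 : 0 ≤ p) (hp1 : p ≤ 1) (n : ℕ) :
    probAtLeastTwo n p ≤ n.choose 2 * p ^ 2 := by
  match n with
  | 0 => simp [probAtLeastTwo]
  | 1 => simp [probAtLeastTwo]
  | m + 2 =>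
    have ih := probAtLeastTwo_le_choose_two_mul_sq hp0 hp1 (m + 1)
    have hpow : (1 - p) ^ m ≤ 1 := pow_le_one₀ (by linarith) (by linarith)
    have hchoose : ((m + 2).choose 2 : ℝ) = (m + 1).choose 2 + (m + 1) := by
      rw [Nat.choose_succ_succ', Nat.choose_one_right]
      push_cast
      ring
    rw [probAtLeastTwo_succ_succ, hchoose]
    nlinarith [mul_le_mul_of_nonneg_left hpow (by positivity : (0 : ℝ) ≤ (m + 1) * p ^ 2)]

theorem probAtLeastTwo_le_sq_mul_sq (hp0 : 0 ≤ p) (hp1 : p ≤ 1) (n : ℕ) :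
    probAtLeastTwo n p ≤ (n : ℝ) ^ 2 / 2 * p ^ 2 := by
  refine (probAtLeastTwo_le_choose_two_mul_sq hp0 hp1 n).trans ?_
  gcongr
  rw [Nat.cast_choose_two]
  nlinarith [(n.cast_nonneg : (0 : ℝ) ≤ n)]

end probAtLeastTwo

section hashProb

theorem hashProb_nonneg (t i : ℕ) : 0 ≤ hashProb t i := by
  unfold hashProb
  split_ifs <;> positivity

theorem hashProb_le_one (t i : ℕ) : hashProb t i ≤ 1 := by
  unfold hashProb
  split_ifs <;> exact pow_le_one₀ (by norm_num) (by norm_num)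

theorem hashProb_sq_of_lt {t i : ℕ} (h : i < t - 1) : hashProb t i ^ 2 = (1 / 4 : ℝ) ^ (i + 1) := by
  rw [hashProb, if_pos h, ← pow_mul, mul_comm, pow_mul]
  norm_num

theorem hashProb_sq_last (t : ℕ) : hashProb t (t - 1) ^ 2 = (1 / 4 : ℝ) ^ (t - 1) := by
  rw [hashProb, if_neg (lt_irrefl _), ← pow_mul, mul_comm, pow_mul]
  norm_num

theorem sum_hashProb_sq_tail {l : ℕ} (hl : 1 ≤ l) (s : ℕ) :
    ∑ x ∈ range (s + 1), hashProb (l + s) (l - 1 + x) ^ 2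
      = 4 / 3 * (1 / 4 : ℝ) ^ l * (1 + 2 * (1 / 4 : ℝ) ^ s) := by
  have hmid : ∀ x ∈ range s, hashProb (l + s) (l - 1 + x) ^ 2 = (1 / 4 : ℝ) ^ l * (1 / 4) ^ x := by
    intro x hx
    rw [hashProb_sq_of_lt (by simp at hx; omega), ← pow_add]
    congr 1
    omega
  have hlast : hashProb (l + s) (l - 1 + s) ^ 2 = 4 * ((1 / 4 : ℝ) ^ l * (1 / 4) ^ s) := by
    obtain ⟨k, hk⟩ : ∃ k, l + s = k + 1 := ⟨l + s - 1, by omega⟩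
    rw [show l - 1 + s = l + s - 1 by omega, hashProb_sq_last, ← pow_add, hk, Nat.add_sub_cancel,
      pow_succ]
    ring
  rw [sum_range_succ, sum_congr rfl hmid, ← mul_sum, geom_sum_eq (by norm_num), hlast]
  ring

end hashProb

theorem one_div_four_pow_clog_le {N : ℕ} (hN : N ≠ 0) :
    (1 / 4 : ℝ) ^ Nat.clog 2 N ≤ 1 / (N : ℝ) ^ 2 := by
  have hle : (N : ℝ) ≤ 2 ^ Nat.clog 2 N := by exact_mod_cast Nat.le_pow_clog (by norm_num) N
  rw [show (1 / 4 : ℝ) = (1 / 2) ^ 2 by norm_num, ← pow_mul, mul_comm, pow_mul, one_div_pow,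
    one_div_pow]
  gcongr

/-- (Theorem 2.) Let `T ≥ 2`, let `n b` (`b : Fin T`, index `0` playing the role of
type 1) be positive integers, `n_r = max(n₁,…,n_T)` with `n_r ≥ 2`, `l = ⌈log₂ n_r⌉`
(i.e. `Nat.clog 2 n_r`), `s ≥ 1`, `t = l + s`. With `p_i = 1/2^(i+1)` for
`i ≤ t-2`, `p_(t-1) = 1/2^(t-1)`, and
`Q1(i) = 1 - (1-p_i)^(n₁) - n₁ p_i (1-p_i)^(n₁-1)`, we have
`∑_{i=0}^{t-1} Q1(i) ≤ (l-1) + (2/3)(n₁²/n_r²)(1 + 2/4^s)`. -/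
theorem stmt15 (T : ℕ) (hT : 2 ≤ T) (n : Fin T → ℕ)
    (nr : ℕ) (hnr2 : 2 ≤ nr)
    (s : ℕ) :
    let z : Fin T := ⟨0, by omega⟩
    let l : ℕ := Nat.clog 2 nr
    let t : ℕ := l + s
    let p : ℕ → ℝ := fun i => if i < t - 1 then (1 / 2 : ℝ) ^ (i + 1) else (1 / 2 : ℝ) ^ (t - 1)
    let Q1 : ℕ → ℝ := fun i =>
      1 - (1 - p i) ^ (n z) - (n z : ℝ) * p i * (1 - p i) ^ (n z - 1)
    ∑ i ∈ Finset.range t, Q1 i ≤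
      ((l : ℝ) - 1) + (2 / 3) * ((n z : ℝ) ^ 2 / (nr : ℝ) ^ 2) * (1 + 2 / (4 : ℝ) ^ s) := by
  intro z l t p Q1
  change ∑ i ∈ range t, probAtLeastTwo (n z) (hashProb t i) ≤ _
  have hl : 1 ≤ l := Nat.clog_pos (by norm_num) (by omega)
  have hsplit := sum_range_add (fun i => probAtLeastTwo (n z) (hashProb t i)) (l - 1) (s + 1)
  rw [show l - 1 + (s + 1) = t by omega] at hsplit
  rw [hsplit]
  have head : ∑ i ∈ range (l - 1), probAtLeastTwo (n z) (hashProb t i) ≤ (l : ℝ) - 1 := by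
    calc _ ≤ ∑ _i ∈ range (l - 1), (1 : ℝ) :=
          sum_le_sum fun i _ => probAtLeastTwo_le_one (hashProb_nonneg t i) (hashProb_le_one t i) _
      _ = (l : ℝ) - 1 := by simp [Nat.cast_sub hl]
  have tail : ∑ x ∈ range (s + 1), probAtLeastTwo (n z) (hashProb t (l - 1 + x))
      ≤ (2 / 3) * ((n z : ℝ) ^ 2 / (nr : ℝ) ^ 2) * (1 + 2 / (4 : ℝ) ^ s) := by
    calc _ ≤ ∑ x ∈ range (s + 1), (n z : ℝ) ^ 2 / 2 * hashProb t (l - 1 + x) ^ 2 :=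
          sum_le_sum fun x _ => probAtLeastTwo_le_sq_mul_sq (hashProb_nonneg _ _)
            (hashProb_le_one _ _) _
      _ = (n z : ℝ) ^ 2 / 2 * (4 / 3 * (1 / 4 : ℝ) ^ l * (1 + 2 * (1 / 4 : ℝ) ^ s)) := by
          rw [← mul_sum, sum_hashProb_sq_tail hl]
      _ ≤ (n z : ℝ) ^ 2 / 2 * (4 / 3 * (1 / (nr : ℝ) ^ 2) * (1 + 2 * (1 / 4 : ℝ) ^ s)) := by
          gcongr
          exact one_div_four_pow_clog_le (by omega)
      _ = _ := by
          rw [one_div_pow]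
          ring
  linarith
end
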